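/- Inversion symmetry of the Euler/charge data: if E = Σ_α (1 − d/2 − μ_α) v^α ∂/∂v^α satisfies E(F) = (3−d)F + (1/2)A_{αβ}v^αv^β + B_αv^α + C, and F̂, v̂ are defined by the inversion transformation, then Ê(F̂) = (3−d̂)F̂ + (quadratic polynomial in v̂), where Ê = Σ_α (1 − d̂/2 − μ̂_α)v̂^α ∂/∂v̂^α with d̂ = 2−d, μ̂₁ = μ_n − 1, μ̂_n = μ₁ + 1, and μ̂_i = μ_i for 2 ≤ i ≤ n−1. -/

import Mathlib

noncomputable section

/-- The anti-diagonal metric `η_{αβ} = δ_{α+β,n+1}` (0-based: `α+β = n-1`). -/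
def eta (n : ℕ) (α β : Fin n) : ℝ := if (α : ℕ) + (β : ℕ) = n - 1 then 1 else 0

/-- The last index (1-based index `n`). -/
def lastI (n : ℕ) (hn : 0 < n) : Fin n := ⟨n - 1, by omega⟩

/-- The first index (1-based index `1`). -/
def firstI (n : ℕ) (hn : 0 < n) : Fin n := ⟨0, hn⟩

/-- The inversion map: `v̂¹ = ½ (η_{αβ} v^α v^β)/vⁿ`, `v̂^i = v^i/vⁿ` for `2 ≤ i ≤ n-1`,
`v̂ⁿ = -1/vⁿ`. -/
def invMap (n : ℕ) (hn : 0 < n) (v : Fin n → ℝ) : Fin n → ℝ := fun α =>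
  if (α : ℕ) = 0 then
    (1 / 2) * (∑ β, ∑ γ, eta n β γ * v β * v γ) / v (lastI n hn)
  else if (α : ℕ) = n - 1 then
    -1 / v (lastI n hn)
  else
    v α / v (lastI n hn)


/-- Partial derivative `∂f/∂v^i`. -/
def pd {n : ℕ} (f : (Fin n → ℝ) → ℝ) (i : Fin n) (x : Fin n → ℝ) : ℝ :=
  fderiv ℝ f x (Pi.single i 1)

/-- The inverted potential `F̂(v̂) = (vⁿ)⁻² (F(v) - ½ η_{αβ} v¹ v^α v^β)`, `v = invMap v̂`. -/
def potHat (n : ℕ) (hn : 0 < n) (F : (Fin n → ℝ) → ℝ) : (Fin n → ℝ) → ℝ := fun vh =>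
  (invMap n hn vh (lastI n hn))⁻¹ ^ 2 *
    (F (invMap n hn vh) -
      (1 / 2) * ∑ α, ∑ β,
        eta n α β * invMap n hn vh (firstI n hn) * invMap n hn vh α * invMap n hn vh β)

/-- The hatted spectrum: `μ̂₁ = μ_n - 1`, `μ̂_n = μ₁ + 1`, `μ̂_i = μ_i` otherwise. -/
def muHat (n : ℕ) (hn : 0 < n) (μ : Fin n → ℝ) : Fin n → ℝ := fun α =>
  if (α : ℕ) = 0 then μ (lastI n hn) - 1
  else if (α : ℕ) = n - 1 then μ (firstI n hn) + 1
  else μ α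

namespace Inv10

variable {n : ℕ}

def sg (n : ℕ) (hn : 0 < n) (α : Fin n) : Fin n := ⟨n - 1 - (α : ℕ), by have := α.isLt; omega⟩

variable (hn : 0 < n)

lemma sg_sg (α : Fin n) : sg n hn (sg n hn α) = α := by
  have := α.isLt; simp only [sg, Fin.ext_iff]; omega

lemma sg_eq_iff {α γ : Fin n} : sg n hn α = γ ↔ α = sg n hn γ := by
  have h1 := α.isLt; have h2 := γ.isLt
  simp [sg, Fin.ext_iff]; omega

lemma sg_first : sg n hn (firstI n hn) = lastI n hn := by
  simp [sg, firstI, lastI]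

lemma sg_last : sg n hn (lastI n hn) = firstI n hn := by
  simp [sg, firstI, lastI, Fin.ext_iff]

lemma eta_eq (α β : Fin n) : eta n α β = if β = sg n hn α then 1 else 0 := by
  have h1 := α.isLt; have h2 := β.isLt
  unfold eta
  congr 1
  simp only [sg, Fin.ext_iff, eq_iff_iff]
  omega

lemma eta_sum (f : Fin n → ℝ) (α : Fin n) : ∑ β, eta n α β * f β = f (sg n hn α) := by
  simp only [eta_eq hn, ite_mul, one_mul, zero_mul]
  simp

def Qf (n : ℕ) : (Fin n → ℝ) → ℝ := fun u => ∑ α, ∑ β, eta n α β * u α * u β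

lemma Qf_eq (u : Fin n → ℝ) : Qf n u = ∑ α, u α * u (sg n hn α) := by
  unfold Qf
  refine Finset.sum_congr rfl fun α _ => ?_
  calc ∑ β, eta n α β * u α * u β = u α * ∑ β, eta n α β * u β := by
        rw [Finset.mul_sum]; exact Finset.sum_congr rfl fun β _ => by ring
    _ = u α * u (sg n hn α) := by rw [eta_sum hn]


lemma split3 (h2 : 2 ≤ n) (f : Fin n → ℝ) :
    ∑ α, f α = f (firstI n hn) + f (lastI n hn)
      + ∑ α ∈ Finset.univ \ {firstI n hn, lastI n hn}, f α := by
  have hne : firstI n hn ≠ lastI n hn := by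
    simp [firstI, lastI, Fin.ext_iff]; omega
  have hsub : ({firstI n hn, lastI n hn} : Finset (Fin n)) ⊆ Finset.univ :=
    Finset.subset_univ _
  rw [← Finset.sum_sdiff hsub, Finset.sum_pair hne]
  ring

lemma mem_mid {α : Fin n} (h2 : 2 ≤ n)
    (h : α ∈ Finset.univ \ {firstI n hn, lastI n hn}) :
    (α : ℕ) ≠ 0 ∧ (α : ℕ) ≠ n - 1 := by
  simp only [Finset.mem_sdiff, Finset.mem_insert, Finset.mem_singleton, not_or] at h
  obtain ⟨-, h1, h2'⟩ := h
  constructor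
  · intro h0; exact h1 (by simp [firstI, Fin.ext_iff, h0])
  · intro h0; exact h2' (by simp [lastI, Fin.ext_iff, h0])

lemma sum_reindex (f : Fin n → ℝ) : ∑ γ, f γ = ∑ γ, f (sg n hn γ) :=
  Fintype.sum_equiv ⟨sg n hn, sg n hn, sg_sg hn, sg_sg hn⟩ _ _ (fun γ => by
    show f γ = f (sg n hn (sg n hn γ)); rw [sg_sg])

lemma pair_sum (d : ℝ) (g u : Fin n → ℝ) (hg : ∀ γ, g γ + g (sg n hn γ) = d) :
    ∑ γ, g γ * (u γ * u (sg n hn γ)) = d / 2 * ∑ γ, u γ * u (sg n hn γ) := by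
  have h1 : ∑ γ, g γ * (u γ * u (sg n hn γ))
      = ∑ γ, g (sg n hn γ) * (u γ * u (sg n hn γ)) := by
    conv_lhs => rw [sum_reindex hn (fun γ => g γ * (u γ * u (sg n hn γ)))]
    exact Finset.sum_congr rfl fun γ _ => by rw [sg_sg]; ring
  have h2 : ∑ γ, g γ * (u γ * u (sg n hn γ)) + ∑ γ, g (sg n hn γ) * (u γ * u (sg n hn γ))
      = ∑ γ, d * (u γ * u (sg n hn γ)) := by
    rw [← Finset.sum_add_distrib]
    exact Finset.sum_congr rfl fun γ _ => by rw [← add_mul, hg γ]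
  have h3 : ∑ γ, d * (u γ * u (sg n hn γ)) = d * ∑ γ, u γ * u (sg n hn γ) := by
    rw [Finset.mul_sum]
  linarith

section values
variable (u : Fin n → ℝ)

lemma invMap_last (h2 : 2 ≤ n) : invMap n hn u (lastI n hn) = -1 / u (lastI n hn) := by
  have h0 : ¬((lastI n hn : ℕ) = 0) := by have := h2; simp only [lastI]; omega
  have h1 : ((lastI n hn : ℕ)) = n - 1 := rfl
  unfold invMap
  rw [if_neg h0, if_pos h1]

lemma invMap_first : invMap n hn u (firstI n hn) = 1 / 2 * Qf n u / u (lastI n hn) := by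
  have h0 : ((firstI n hn : ℕ)) = 0 := rfl
  unfold invMap
  rw [if_pos h0]
  rfl

lemma invMap_mid {β : Fin n} (hβ0 : (β : ℕ) ≠ 0) (hβN : (β : ℕ) ≠ n - 1) :
    invMap n hn u β = u β / u (lastI n hn) := by
  unfold invMap
  rw [if_neg hβ0, if_neg hβN]

end values


section calcrules

variable {f g : (Fin n → ℝ) → ℝ} {u : Fin n → ℝ} {γ : Fin n}

lemma clm_expand (L : (Fin n → ℝ) →L[ℝ] ℝ) (v : Fin n → ℝ) :
    L v = ∑ β, v β * L (Pi.single β 1) := by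
  conv_lhs => rw [show v = ∑ β, Pi.single β (v β) from (Finset.univ_sum_single v).symm]
  rw [map_sum]
  refine Finset.sum_congr rfl fun β _ => ?_
  rw [show Pi.single β (v β) = (v β : ℝ) • (Pi.single β (1:ℝ) : Fin n → ℝ) from by
    ext j; simp [Pi.single_apply]]
  rw [map_smul]; rfl

lemma diff_proj (i : Fin n) : DifferentiableAt ℝ (fun x : Fin n → ℝ => x i) u :=
  (ContinuousLinearMap.proj i : (Fin n → ℝ) →L[ℝ] ℝ).differentiableAt

lemma pd_proj (i : Fin n) : pd (fun x : Fin n → ℝ => x i) γ u = if i = γ then 1 else 0 := by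
  rw [pd, show (fun x : Fin n → ℝ => x i)
      = ⇑(ContinuousLinearMap.proj i : (Fin n → ℝ) →L[ℝ] ℝ) from rfl,
    ContinuousLinearMap.fderiv]
  simp [Pi.single_apply]

lemma pd_mul (hf : DifferentiableAt ℝ f u) (hg : DifferentiableAt ℝ g u) :
    pd (fun x => f x * g x) γ u = f u * pd g γ u + g u * pd f γ u := by
  rw [pd, fderiv_fun_mul hf hg]
  simp [pd, smul_eq_mul]

lemma pd_add (hf : DifferentiableAt ℝ f u) (hg : DifferentiableAt ℝ g u) :
    pd (fun x => f x + g x) γ u = pd f γ u + pd g γ u := by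
  rw [pd, fderiv_fun_add hf hg]; simp [pd]

lemma pd_const_mul (hf : DifferentiableAt ℝ f u) (c : ℝ) :
    pd (fun x => c * f x) γ u = c * pd f γ u := by
  rw [pd, fderiv_const_mul hf c]; simp [pd, smul_eq_mul]

lemma pd_sum {ι : Type*} (s : Finset ι) (A : ι → (Fin n → ℝ) → ℝ)
    (h : ∀ i ∈ s, DifferentiableAt ℝ (A i) u) :
    pd (fun x => ∑ i ∈ s, A i x) γ u = ∑ i ∈ s, pd (A i) γ u := by
  rw [pd, fderiv_fun_sum h]; simp [pd]

lemma pd_inv (hf : DifferentiableAt ℝ f u) (hne : f u ≠ 0) :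
    pd (fun x => (f x)⁻¹) γ u = -pd f γ u / (f u) ^ 2 := by
  rw [pd, show (fun x => (f x)⁻¹) = Inv.inv ∘ f from rfl,
    fderiv_comp u (differentiableAt_inv hne) hf, fderiv_inv' hne]
  simp only [ContinuousLinearMap.comp_apply, ContinuousLinearMap.neg_apply,
    ContinuousLinearMap.mulLeftRight_apply, pd]
  field_simp

end calcrules


section deriv

variable {u : Fin n → ℝ}

lemma Qf_repr : Qf n = fun u : Fin n → ℝ => ∑ α, u α * u (sg n hn α) := by
  exact funext (Qf_eq hn)

include hn

lemma diff_Qf : DifferentiableAt ℝ (Qf n) u := by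
  rw [Qf_repr hn]
  exact DifferentiableAt.fun_sum fun α _ => (diff_proj α).fun_mul (diff_proj _)

lemma pd_Qf (γ : Fin n) : pd (Qf n) γ u = 2 * u (sg n hn γ) := by
  rw [Qf_repr hn, pd_sum _ _ (fun α _ => (diff_proj α).fun_mul (diff_proj _))]
  have : ∀ α, pd (fun x : Fin n → ℝ => x α * x (sg n hn α)) γ u
      = u α * (if sg n hn α = γ then 1 else 0) + u (sg n hn α) * (if α = γ then 1 else 0) := by
    intro α
    rw [pd_mul (diff_proj α) (diff_proj _), pd_proj, pd_proj]
  simp only [this]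
  rw [Finset.sum_add_distrib]
  have e1 : ∑ α, u α * (if sg n hn α = γ then 1 else 0) = u (sg n hn γ) := by
    have hc : ∀ α : Fin n, (sg n hn α = γ) = (α = sg n hn γ) := by
      intro α; rw [eq_iff_iff]; constructor
      · intro h; rw [← h, sg_sg]
      · intro h; rw [h, sg_sg]
    simp only [hc, mul_ite, mul_one, mul_zero]
    simp
  have e2 : ∑ α, u (sg n hn α) * (if α = γ then 1 else 0) = u (sg n hn γ) := by
    simp only [mul_ite, mul_one, mul_zero]
    simp
  rw [e1, e2]; ring

omit hn

/-- The Jacobian matrix of `invMap`: `Minv β γ = ∂(invMap x β)/∂x γ`. -/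
def Minv (n : ℕ) (hn : 0 < n) (u : Fin n → ℝ) (β γ : Fin n) : ℝ :=
  (if (β : ℕ) = 0 then u (sg n hn γ) / u (lastI n hn)
   else if (β : ℕ) = n - 1 then 0
   else if γ = β then 1 / u (lastI n hn) else 0)
  + (if γ = lastI n hn then
      (if (β : ℕ) = 0 then -(1/2) * Qf n u / (u (lastI n hn))^2
       else if (β : ℕ) = n - 1 then 1 / (u (lastI n hn))^2
       else -(u β) / (u (lastI n hn))^2)
     else 0)

include hn

lemma diff_cmp (h2 : 2 ≤ n) (hs : u (lastI n hn) ≠ 0) (β : Fin n) :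
    DifferentiableAt ℝ (fun x => invMap n hn x β) u := by
  by_cases hβ0 : (β : ℕ) = 0
  · rw [show (fun x => invMap n hn x β)
        = fun x : Fin n → ℝ => 1 / 2 * Qf n x * (x (lastI n hn))⁻¹ from
      funext fun x => by
        rw [show β = firstI n hn from by simp [firstI, Fin.ext_iff, hβ0],
          invMap_first hn x, div_eq_mul_inv]]
    exact ((diff_Qf hn).const_mul _).mul ((diff_proj _).inv hs)
  · by_cases hβN : (β : ℕ) = n - 1
    · rw [show (fun x => invMap n hn x β)
          = fun x : Fin n → ℝ => (-1) * (x (lastI n hn))⁻¹ from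
        funext fun x => by
          rw [show β = lastI n hn from by simp [lastI, Fin.ext_iff, hβN],
            invMap_last hn x h2, div_eq_mul_inv]]
      exact ((diff_proj _).inv hs).const_mul _
    · rw [show (fun x => invMap n hn x β)
          = fun x : Fin n → ℝ => x β * (x (lastI n hn))⁻¹ from
        funext fun x => by rw [invMap_mid hn x hβ0 hβN, div_eq_mul_inv]]
      exact (diff_proj _).mul ((diff_proj _).inv hs)

lemma pd_cmp (h2 : 2 ≤ n) (hs : u (lastI n hn) ≠ 0) (β γ : Fin n) :
    pd (fun x => invMap n hn x β) γ u = Minv n hn u β γ := by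
  by_cases hβ0 : (β : ℕ) = 0
  · rw [show (fun x => invMap n hn x β)
        = fun x : Fin n → ℝ => 1 / 2 * Qf n x * (x (lastI n hn))⁻¹ from
      funext fun x => by
        rw [show β = firstI n hn from by simp [firstI, Fin.ext_iff, hβ0],
          invMap_first hn x, div_eq_mul_inv]]
    rw [pd_mul ((diff_Qf hn).const_mul _) ((diff_proj _).fun_inv hs),
      pd_inv (diff_proj _) hs, pd_proj, pd_const_mul (diff_Qf hn), pd_Qf hn]
    unfold Minv
    rw [if_pos hβ0, if_pos hβ0]
    by_cases hγ : γ = lastI n hn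
    · simp only [hγ, if_pos rfl, if_true]
      field_simp
      ring
    · rw [if_neg hγ, if_neg (fun h => hγ h.symm)]
      field_simp
      ring
  · by_cases hβN : (β : ℕ) = n - 1
    · rw [show (fun x => invMap n hn x β)
          = fun x : Fin n → ℝ => (-1) * (x (lastI n hn))⁻¹ from
        funext fun x => by
          rw [show β = lastI n hn from by simp [lastI, Fin.ext_iff, hβN],
            invMap_last hn x h2, div_eq_mul_inv]]
      rw [pd_const_mul ((diff_proj _).fun_inv hs), pd_inv (diff_proj _) hs, pd_proj]
      unfold Minv
      rw [if_neg hβ0, if_neg hβ0, if_pos hβN, if_pos hβN]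
      by_cases hγ : γ = lastI n hn
      · simp only [hγ, if_pos rfl, if_true]
        field_simp
        ring
      · rw [if_neg hγ, if_neg (fun h => hγ h.symm)]
        simp
    · rw [show (fun x => invMap n hn x β)
          = fun x : Fin n → ℝ => x β * (x (lastI n hn))⁻¹ from
        funext fun x => by rw [invMap_mid hn x hβ0 hβN, div_eq_mul_inv]]
      rw [pd_mul (diff_proj _) ((diff_proj _).fun_inv hs), pd_inv (diff_proj _) hs,
        pd_proj, pd_proj]
      unfold Minv
      rw [if_neg hβ0, if_neg hβ0, if_neg hβN, if_neg hβN]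
      have hβ : β ≠ lastI n hn := by
        intro h; rw [h] at hβN; exact hβN rfl
      by_cases hγ : γ = lastI n hn
      · simp only [hγ, if_pos rfl, if_true]
        rw [if_neg (show ¬(lastI n hn = β) from fun h => hβ h.symm), if_neg hβ]
        field_simp
        ring
      · rw [if_neg hγ, if_neg (fun h => hγ h.symm)]
        by_cases hγβ : γ = β
        · simp only [hγβ, if_pos rfl, if_true]
          field_simp
          ring
        · rw [if_neg hγβ, if_neg (fun h => hγβ h.symm)]
          simp


lemma diff_invMap (h2 : 2 ≤ n) (hs : u (lastI n hn) ≠ 0) :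
    DifferentiableAt ℝ (invMap n hn) u :=
  differentiableAt_pi.2 fun β => diff_cmp hn h2 hs β

lemma fderiv_invMap_single (h2 : 2 ≤ n) (hs : u (lastI n hn) ≠ 0) (γ : Fin n) :
    fderiv ℝ (invMap n hn) u (Pi.single γ 1) = fun β => Minv n hn u β γ := by
  have h := fderiv_pi (𝕜 := ℝ) (φ := fun β (x : Fin n → ℝ) => invMap n hn x β) (x := u)
    (fun β => diff_cmp hn h2 hs β)
  have h' : fderiv ℝ (invMap n hn) u
      = ContinuousLinearMap.pi (fun β => fderiv ℝ (fun x => invMap n hn x β) u) := h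
  rw [h']
  funext β
  rw [ContinuousLinearMap.pi_apply]
  exact pd_cmp hn h2 hs β γ

lemma pd_Fcomp {F : (Fin n → ℝ) → ℝ} (hF : ContDiff ℝ (⊤ : ℕ∞) F)
    (h2 : 2 ≤ n) (hs : u (lastI n hn) ≠ 0) (γ : Fin n) :
    pd (fun x => F (invMap n hn x)) γ u
      = ∑ β, Minv n hn u β γ * pd F β (invMap n hn u) := by
  have hFd : DifferentiableAt ℝ F (invMap n hn u) :=
    (hF.differentiable (by simp)).differentiableAt
  rw [pd, show (fun x => F (invMap n hn x)) = F ∘ invMap n hn from rfl,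
    fderiv_comp u hFd (diff_invMap hn h2 hs), ContinuousLinearMap.comp_apply,
    fderiv_invMap_single hn h2 hs γ, clm_expand]
  rfl

lemma diff_Fcomp {F : (Fin n → ℝ) → ℝ} (hF : ContDiff ℝ (⊤ : ℕ∞) F)
    (h2 : 2 ≤ n) (hs : u (lastI n hn) ≠ 0) :
    DifferentiableAt ℝ (fun x => F (invMap n hn x)) u :=
  DifferentiableAt.comp u ((hF.differentiable (by simp)).differentiableAt)
    (diff_invMap hn h2 hs)

end deriv

section pothat

variable {u : Fin n → ℝ}

include hn

lemma Qf_invMap (h2 : 2 ≤ n) (hs : u (lastI n hn) ≠ 0) :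
    Qf n (invMap n hn u) = -2 * u (firstI n hn) / u (lastI n hn) := by
  rw [Qf_eq hn (invMap n hn u),
    split3 hn h2 (fun α => invMap n hn u α * invMap n hn u (sg n hn α)),
    sg_first, sg_last, invMap_first hn u, invMap_last hn u h2]
  have hmid : ∀ α ∈ Finset.univ \ ({firstI n hn, lastI n hn} : Finset (Fin n)),
      invMap n hn u α * invMap n hn u (sg n hn α)
        = u α * u (sg n hn α) / (u (lastI n hn) * u (lastI n hn)) := by
    intro α hα
    obtain ⟨h0, hN⟩ := mem_mid hn h2 hα
    have hσ0 : ((sg n hn α : Fin n) : ℕ) ≠ 0 := by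
      have := α.isLt; simp only [sg]; omega
    have hσN : ((sg n hn α : Fin n) : ℕ) ≠ n - 1 := by
      have := α.isLt; simp only [sg]; omega
    rw [invMap_mid hn u h0 hN, invMap_mid hn u hσ0 hσN, div_mul_div_comm]
  rw [Finset.sum_congr rfl hmid, ← Finset.sum_div]
  have hQ : Qf n u = u (firstI n hn) * u (lastI n hn) + u (lastI n hn) * u (firstI n hn)
      + ∑ α ∈ Finset.univ \ ({firstI n hn, lastI n hn} : Finset (Fin n)),
          u α * u (sg n hn α) := by
    rw [Qf_eq hn u, split3 hn h2 (fun α => u α * u (sg n hn α)), sg_first, sg_last]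
  have hmids : ∑ α ∈ Finset.univ \ ({firstI n hn, lastI n hn} : Finset (Fin n)),
      u α * u (sg n hn α)
      = Qf n u - 2 * (u (firstI n hn) * u (lastI n hn)) := by
    rw [hQ]; ring
  rw [hmids]
  field_simp
  ring

lemma potHat_eq {F : (Fin n → ℝ) → ℝ} (h2 : 2 ≤ n) (hs : u (lastI n hn) ≠ 0) :
    potHat n hn F u = u (lastI n hn) * u (lastI n hn) * F (invMap n hn u)
      + 1 / 2 * (u (firstI n hn) * Qf n u) := by
  unfold potHat
  have htriple : (∑ α, ∑ β, eta n α β * invMap n hn u (firstI n hn)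
        * invMap n hn u α * invMap n hn u β)
      = invMap n hn u (firstI n hn) * Qf n (invMap n hn u) := by
    unfold Qf
    rw [Finset.mul_sum]
    refine Finset.sum_congr rfl fun α _ => ?_
    rw [Finset.mul_sum]
    exact Finset.sum_congr rfl fun β _ => by ring
  rw [htriple, Qf_invMap hn h2 hs, invMap_first hn u, invMap_last hn u h2]
  have h1 : (-1 / u (lastI n hn))⁻¹ = -u (lastI n hn) := by
    field_simp
  rw [h1]
  field_simp
  ring


lemma pd_potHat {F : (Fin n → ℝ) → ℝ} (hF : ContDiff ℝ (⊤ : ℕ∞) F)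
    (h2 : 2 ≤ n) (hs : u (lastI n hn) ≠ 0) (γ : Fin n) :
    pd (potHat n hn F) γ u
      = u (lastI n hn) * u (lastI n hn) * (∑ β, Minv n hn u β γ * pd F β (invMap n hn u))
        + F (invMap n hn u) * ((u (lastI n hn) + u (lastI n hn))
            * (if lastI n hn = γ then 1 else 0))
        + 1 / 2 * (u (firstI n hn) * (2 * u (sg n hn γ))
            + Qf n u * (if firstI n hn = γ then 1 else 0)) := by
  have hopen : IsOpen {x : Fin n → ℝ | x (lastI n hn) ≠ 0} :=
    IsOpen.preimage (continuous_apply (lastI n hn)) isOpen_ne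
  have hev : potHat n hn F =ᶠ[nhds u]
      (fun x => x (lastI n hn) * x (lastI n hn) * F (invMap n hn x)
        + 1 / 2 * (x (firstI n hn) * Qf n x)) :=
    Filter.eventuallyEq_of_mem (hopen.mem_nhds hs) (fun x hx => potHat_eq hn h2 hx)
  have hpd : pd (potHat n hn F) γ u
      = pd (fun x => x (lastI n hn) * x (lastI n hn) * F (invMap n hn x)
          + 1 / 2 * (x (firstI n hn) * Qf n x)) γ u := by
    rw [pd, pd, hev.fderiv_eq]
  rw [hpd]
  have d1 : DifferentiableAt ℝ
      (fun x : Fin n → ℝ => x (lastI n hn) * x (lastI n hn)) u :=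
    (diff_proj _).mul (diff_proj _)
  have d2 : DifferentiableAt ℝ (fun x => F (invMap n hn x)) u :=
    diff_Fcomp hn hF h2 hs
  have d3 : DifferentiableAt ℝ (fun x : Fin n → ℝ => x (firstI n hn) * Qf n x) u :=
    (diff_proj _).mul (diff_Qf hn)
  rw [pd_add (d1.fun_mul d2) (d3.const_mul _), pd_mul d1 d2,
    pd_mul (diff_proj _) (diff_proj _), pd_proj,
    pd_const_mul d3, pd_mul (diff_proj _) (diff_Qf hn), pd_Qf hn, pd_proj,
    pd_Fcomp hn hF h2 hs]
  ring


lemma sum_if_collapse (f : Fin n → ℝ) (c : Fin n) (a : ℝ) :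
    ∑ γ, f γ * (if γ = c then a else 0) = f c * a := by
  simp [mul_ite, Finset.sum_ite_eq']

end pothat

section spectrum

include hn

lemma mu_last (μ : Fin n → ℝ) (d : ℝ) (h2 : 2 ≤ n) (hμ1 : μ (firstI n hn) = -d/2)
    (hdual : ∀ α, μ α + μ (sg n hn α) = 0) : μ (lastI n hn) = d / 2 := by
  have h := hdual (firstI n hn)
  rw [sg_first] at h
  linarith

lemma mhat_first (μ : Fin n → ℝ) (d : ℝ) (h2 : 2 ≤ n) (hμ1 : μ (firstI n hn) = -d/2)
    (hdual : ∀ α, μ α + μ (sg n hn α) = 0) :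
    muHat n hn μ (firstI n hn) = d / 2 - 1 := by
  unfold muHat
  rw [if_pos (show ((firstI n hn : ℕ)) = 0 from rfl), mu_last hn μ d h2 hμ1 hdual]

lemma mhat_last (μ : Fin n → ℝ) (d : ℝ) (h2 : 2 ≤ n) (hμ1 : μ (firstI n hn) = -d/2) :
    muHat n hn μ (lastI n hn) = -d / 2 + 1 := by
  unfold muHat
  rw [if_neg (show ¬((lastI n hn : ℕ)) = 0 from by simp only [lastI]; omega),
    if_pos (show ((lastI n hn : ℕ)) = n - 1 from rfl), hμ1]

lemma mhat_mid (μ : Fin n → ℝ) {γ : Fin n} (hγ0 : (γ : ℕ) ≠ 0) (hγN : (γ : ℕ) ≠ n - 1) :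
    muHat n hn μ γ = μ γ := by
  unfold muHat
  rw [if_neg hγ0, if_neg hγN]

lemma mhat_pair (μ : Fin n → ℝ) (d : ℝ) (h2 : 2 ≤ n) (hμ1 : μ (firstI n hn) = -d/2)
    (hdual : ∀ α, μ α + μ (sg n hn α) = 0) (γ : Fin n) :
    (1 - (2 - d)/2 - muHat n hn μ γ) + (1 - (2 - d)/2 - muHat n hn μ (sg n hn γ)) = d := by
  by_cases hγ0 : (γ : ℕ) = 0
  · have hγ : γ = firstI n hn := by simp [firstI, Fin.ext_iff, hγ0]
    subst hγ
    rw [sg_first, mhat_first hn μ d h2 hμ1 hdual, mhat_last hn μ d h2 hμ1]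
    ring
  · by_cases hγN : (γ : ℕ) = n - 1
    · have hγ : γ = lastI n hn := by simp [lastI, Fin.ext_iff, hγN]
      subst hγ
      rw [sg_last, mhat_first hn μ d h2 hμ1 hdual, mhat_last hn μ d h2 hμ1]
      ring
    · have hσ0 : ((sg n hn γ : Fin n) : ℕ) ≠ 0 := by
        have := γ.isLt; simp only [sg]; omega
      have hσN : ((sg n hn γ : Fin n) : ℕ) ≠ n - 1 := by
        have := γ.isLt; simp only [sg]; omega
      rw [mhat_mid hn μ hγ0 hγN, mhat_mid hn μ hσ0 hσN]
      have := hdual γ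
      linarith

end spectrum

section keycoeff

variable {u : Fin n → ℝ}

include hn

lemma key_coeff (h2 : 2 ≤ n) (hs : u (lastI n hn) ≠ 0) (μ : Fin n → ℝ) (d : ℝ)
    (hμ1 : μ (firstI n hn) = -d/2) (hdual : ∀ α, μ α + μ (sg n hn α) = 0) (β : Fin n) :
    ∑ γ, (1 - (2 - d)/2 - muHat n hn μ γ) * u γ * Minv n hn u β γ
      = (1 - d/2 - μ β) * invMap n hn u β := by
  set s := u (lastI n hn) with hsdef
  have hmN : (1 - (2 - d)/2 - muHat n hn μ (lastI n hn)) = d - 1 := by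
    rw [mhat_last hn μ d h2 hμ1]; ring
  by_cases hβ0 : (β : ℕ) = 0
  · have hβ : β = firstI n hn := by simp [firstI, Fin.ext_iff, hβ0]
    subst hβ
    have hexp : ∀ γ, (1 - (2 - d)/2 - muHat n hn μ γ) * u γ * Minv n hn u (firstI n hn) γ
        = (1/s) * ((1 - (2 - d)/2 - muHat n hn μ γ) * (u γ * u (sg n hn γ)))
          + ((1 - (2 - d)/2 - muHat n hn μ γ) * u γ)
              * (if γ = lastI n hn then -(1/2) * Qf n u / s^2 else 0) := by
      intro γ
      unfold Minv
      rw [if_pos (show ((firstI n hn : ℕ)) = 0 from rfl),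
        if_pos (show ((firstI n hn : ℕ)) = 0 from rfl)]
      by_cases hγ : γ = lastI n hn
      · rw [if_pos hγ, hγ]; field_simp; try ring
      · rw [if_neg hγ, ← hsdef]; field_simp
    rw [Finset.sum_congr rfl (fun γ _ => hexp γ), Finset.sum_add_distrib,
      ← Finset.mul_sum,
      pair_sum hn d _ u (mhat_pair hn μ d h2 hμ1 hdual),
      sum_if_collapse hn, hmN, ← Qf_eq hn, invMap_first hn u, hμ1]
    rw [← hsdef]
    field_simp
    ring
  · by_cases hβN : (β : ℕ) = n - 1
    · have hβ : β = lastI n hn := by simp [lastI, Fin.ext_iff, hβN]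
      subst hβ
      have hexp : ∀ γ, (1 - (2 - d)/2 - muHat n hn μ γ) * u γ * Minv n hn u (lastI n hn) γ
          = ((1 - (2 - d)/2 - muHat n hn μ γ) * u γ)
              * (if γ = lastI n hn then 1 / s^2 else 0) := by
        intro γ
        unfold Minv
        rw [if_neg (show ¬((lastI n hn : ℕ)) = 0 from by simp only [lastI]; omega),
          if_pos (show ((lastI n hn : ℕ)) = n - 1 from rfl),
          if_neg (show ¬((lastI n hn : ℕ)) = 0 from by simp only [lastI]; omega),
          if_pos (show ((lastI n hn : ℕ)) = n - 1 from rfl)]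
        by_cases hγ : γ = lastI n hn
        · rw [if_pos hγ, ← hsdef]; ring
        · rw [if_neg hγ]; ring
      rw [Finset.sum_congr rfl (fun γ _ => hexp γ), sum_if_collapse hn, hmN,
        invMap_last hn u h2, mu_last hn μ d h2 hμ1 hdual]
      rw [← hsdef]
      field_simp
      ring
    · have hβL : β ≠ lastI n hn := fun h => hβN (by rw [h]; rfl)
      have hexp : ∀ γ, (1 - (2 - d)/2 - muHat n hn μ γ) * u γ * Minv n hn u β γ
          = ((1 - (2 - d)/2 - muHat n hn μ γ) * u γ) * (if γ = β then 1 / s else 0)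
            + ((1 - (2 - d)/2 - muHat n hn μ γ) * u γ)
                * (if γ = lastI n hn then -(u β) / s^2 else 0) := by
        intro γ
        unfold Minv
        rw [if_neg hβ0, if_neg hβN, if_neg hβ0, if_neg hβN]
        by_cases hγ : γ = lastI n hn
        · rw [if_pos hγ, if_neg (fun h : γ = β => hβL (h ▸ hγ)), ← hsdef]
          ring
        · rw [if_neg hγ]
          by_cases hγβ : γ = β
          · rw [if_pos hγβ, ← hsdef]; ring
          · rw [if_neg hγβ]; ring
      rw [Finset.sum_congr rfl (fun γ _ => hexp γ), Finset.sum_add_distrib,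
        sum_if_collapse hn, sum_if_collapse hn, hmN,
        mhat_mid hn μ hβ0 hβN, invMap_mid hn u hβ0 hβN]
      rw [← hsdef]
      field_simp
      ring

end keycoeff

/-- `Vf α = vⁿ · (invMap v) α` : the cleared-denominator inversion. -/
def Vf (n : ℕ) (u : Fin n → ℝ) : Fin n → ℝ := fun α =>
  if (α : ℕ) = 0 then 1 / 2 * Qf n u
  else if (α : ℕ) = n - 1 then -1
  else u α

def Ahat (n : ℕ) (A : Fin n → Fin n → ℝ) (B : Fin n → ℝ) (C : ℝ) :
    Fin n → Fin n → ℝ := fun α β =>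
  if (α : ℕ) = 0 ∨ (β : ℕ) = 0 then 0
  else if (α : ℕ) = n - 1 ∧ (β : ℕ) = n - 1 then 2 * C
  else if (β : ℕ) = n - 1 then B α
  else if (α : ℕ) = n - 1 then B β
  else A α β

def Bhat (n : ℕ) (hn : 0 < n) (A : Fin n → Fin n → ℝ) (B : Fin n → ℝ) :
    Fin n → ℝ := fun α =>
  if (α : ℕ) = 0 then 0
  else if (α : ℕ) = n - 1 then -B (lastI n hn)
  else -A α (lastI n hn)

section quad

variable {u : Fin n → ℝ}

include hn

lemma Vf_eq (h2 : 2 ≤ n) (hs : u (lastI n hn) ≠ 0) (α : Fin n) :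
    u (lastI n hn) * invMap n hn u α = Vf n u α := by
  unfold Vf
  by_cases hα0 : (α : ℕ) = 0
  · rw [if_pos hα0, show α = firstI n hn from by simp [firstI, Fin.ext_iff, hα0],
      invMap_first hn u]
    field_simp
  · rw [if_neg hα0]
    by_cases hαN : (α : ℕ) = n - 1
    · rw [if_pos hαN, show α = lastI n hn from by simp [lastI, Fin.ext_iff, hαN],
        invMap_last hn u h2]
      field_simp
    · rw [if_neg hαN, invMap_mid hn u hα0 hαN]
      field_simp

lemma quad_transform (h2 : 2 ≤ n) (hs : u (lastI n hn) ≠ 0)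
    (A : Fin n → Fin n → ℝ) (B : Fin n → ℝ) (C : ℝ)
    (hAsym : ∀ α β, A α β = A β α)
    (hA1 : ∀ α, A (firstI n hn) α = 0) (hB1 : B (firstI n hn) = 0) :
    u (lastI n hn) * u (lastI n hn) *
      (1 / 2 * (∑ α, ∑ β, A α β * invMap n hn u α * invMap n hn u β)
        + (∑ α, B α * invMap n hn u α) + C)
    = 1 / 2 * (∑ α, ∑ β, Ahat n A B C α β * u α * u β)
      + (∑ α, Bhat n hn A B α * u α) + 1 / 2 * A (lastI n hn) (lastI n hn) := by
  have h0 : ((firstI n hn : ℕ)) = 0 := rfl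
  have hN : ((lastI n hn : ℕ)) = n - 1 := rfl
  have hN0 : ¬((lastI n hn : ℕ)) = 0 := by simp only [lastI]; omega
  set s := u (lastI n hn) with hsdef
  set mid := Finset.univ \ ({firstI n hn, lastI n hn} : Finset (Fin n)) with hmid
  -- atoms
  set SA := ∑ α ∈ mid, ∑ β ∈ mid, A α β * u α * u β with hSA
  set SAN := ∑ α ∈ mid, A α (lastI n hn) * u α with hSAN
  set SB := ∑ α ∈ mid, B α * u α with hSB
  -- step 1: clear denominators
  have e2 : s * s * (∑ α, ∑ β, A α β * invMap n hn u α * invMap n hn u β)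
      = ∑ α, ∑ β, A α β * Vf n u α * Vf n u β := by
    rw [Finset.mul_sum]
    refine Finset.sum_congr rfl fun α _ => ?_
    rw [Finset.mul_sum]
    refine Finset.sum_congr rfl fun β _ => ?_
    rw [← Vf_eq hn h2 hs α, ← Vf_eq hn h2 hs β]
    ring
  have e1 : s * (∑ α, B α * invMap n hn u α) = ∑ α, B α * Vf n u α := by
    rw [Finset.mul_sum]
    refine Finset.sum_congr rfl fun α _ => ?_
    rw [← Vf_eq hn h2 hs α]
    ring
  -- step 2: evaluate the V-sums
  have hVfirst : Vf n u (firstI n hn) = 1 / 2 * Qf n u := by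
    unfold Vf; rw [if_pos h0]
  have hVlast : Vf n u (lastI n hn) = -1 := by
    unfold Vf; rw [if_neg hN0, if_pos hN]
  have hVmid : ∀ α ∈ mid, Vf n u α = u α := by
    intro α hα
    obtain ⟨hα1, hα2⟩ := mem_mid hn h2 hα
    unfold Vf; rw [if_neg hα1, if_neg hα2]
  have hA0 : ∀ α, A α (firstI n hn) = 0 := fun α => by rw [hAsym, hA1]
  have hAV : ∑ α, ∑ β, A α β * Vf n u α * Vf n u β
      = A (lastI n hn) (lastI n hn) - 2 * SAN + SA := by
    rw [split3 hn h2 (fun α => ∑ β, A α β * Vf n u α * Vf n u β)]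
    have t1 : ∑ β, A (firstI n hn) β * Vf n u (firstI n hn) * Vf n u β = 0 :=
      Finset.sum_eq_zero fun β _ => by rw [hA1]; ring
    have t2 : ∑ β, A (lastI n hn) β * Vf n u (lastI n hn) * Vf n u β
        = A (lastI n hn) (lastI n hn) - SAN := by
      rw [split3 hn h2 (fun β => A (lastI n hn) β * Vf n u (lastI n hn) * Vf n u β),
        hA0, hVlast]
      have : ∑ β ∈ mid, A (lastI n hn) β * -1 * Vf n u β = -SAN := by
        rw [hSAN, ← Finset.sum_neg_distrib]
        refine Finset.sum_congr rfl fun β hβ => ?_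
        rw [hVmid β hβ, hAsym]
        ring
      rw [this]
      ring
    have t3 : ∑ α ∈ mid, ∑ β, A α β * Vf n u α * Vf n u β = -SAN + SA := by
      have inner : ∀ α ∈ mid, ∑ β, A α β * Vf n u α * Vf n u β
          = -(A α (lastI n hn) * u α) + ∑ β ∈ mid, A α β * u α * u β := by
        intro α hα
        rw [split3 hn h2 (fun β => A α β * Vf n u α * Vf n u β), hA0, hVlast,
          hVmid α hα]
        have : ∑ β ∈ mid, A α β * u α * Vf n u β = ∑ β ∈ mid, A α β * u α * u β :=
          Finset.sum_congr rfl fun β hβ => by rw [hVmid β hβ]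
        rw [this]
        ring
      rw [Finset.sum_congr rfl inner, Finset.sum_add_distrib, Finset.sum_neg_distrib,
        hSAN, hSA]
    rw [t1, t2, t3]
    ring
  have hBV : ∑ α, B α * Vf n u α = -B (lastI n hn) + SB := by
    rw [split3 hn h2 (fun α => B α * Vf n u α), hB1, hVlast]
    have : ∑ α ∈ mid, B α * Vf n u α = SB :=
      Finset.sum_congr rfl fun α hα => by rw [hVmid α hα]
    rw [this]
    ring
  -- step 3: evaluate the hatted sums
  have hAhat : ∑ α, ∑ β, Ahat n A B C α β * u α * u β
      = 2 * C * (s * s) + 2 * (s * SB) + SA := by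
    rw [split3 hn h2 (fun α => ∑ β, Ahat n A B C α β * u α * u β)]
    have t1 : ∑ β, Ahat n A B C (firstI n hn) β * u (firstI n hn) * u β = 0 :=
      Finset.sum_eq_zero fun β _ => by
        unfold Ahat; rw [if_pos (Or.inl h0)]; ring
    have t2 : ∑ β, Ahat n A B C (lastI n hn) β * u (lastI n hn) * u β
        = 2 * C * (s * s) + s * SB := by
      rw [split3 hn h2 (fun β => Ahat n A B C (lastI n hn) β * u (lastI n hn) * u β)]
      have w1 : Ahat n A B C (lastI n hn) (firstI n hn) = 0 := by
        unfold Ahat; rw [if_pos (Or.inr h0)]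
      have w2 : Ahat n A B C (lastI n hn) (lastI n hn) = 2 * C := by
        unfold Ahat; rw [if_neg (by push_neg; exact ⟨hN0, hN0⟩), if_pos ⟨hN, hN⟩]
      have w3 : ∑ β ∈ mid, Ahat n A B C (lastI n hn) β * u (lastI n hn) * u β
          = s * SB := by
        rw [hSB, Finset.mul_sum]
        refine Finset.sum_congr rfl fun β hβ => ?_
        obtain ⟨hβ1, hβ2⟩ := mem_mid hn h2 hβ
        unfold Ahat
        rw [if_neg (by push_neg; exact ⟨hN0, hβ1⟩),
          if_neg (by rintro ⟨-, hc⟩; exact hβ2 hc), if_neg hβ2, if_pos hN]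
        ring
      rw [w1, w2, w3]
      ring
    have t3 : ∑ α ∈ mid, ∑ β, Ahat n A B C α β * u α * u β = s * SB + SA := by
      have inner : ∀ α ∈ mid, ∑ β, Ahat n A B C α β * u α * u β
          = B α * u α * s + ∑ β ∈ mid, A α β * u α * u β := by
        intro α hα
        obtain ⟨hα1, hα2⟩ := mem_mid hn h2 hα
        rw [split3 hn h2 (fun β => Ahat n A B C α β * u α * u β)]
        have w1 : Ahat n A B C α (firstI n hn) = 0 := by
          unfold Ahat; rw [if_pos (Or.inr h0)]
        have w2 : Ahat n A B C α (lastI n hn) = B α := by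
          unfold Ahat
          rw [if_neg (by push_neg; exact ⟨hα1, hN0⟩),
            if_neg (by rintro ⟨hc, -⟩; exact hα2 hc), if_pos hN]
        have w3 : ∑ β ∈ mid, Ahat n A B C α β * u α * u β
            = ∑ β ∈ mid, A α β * u α * u β := by
          refine Finset.sum_congr rfl fun β hβ => ?_
          obtain ⟨hβ1, hβ2⟩ := mem_mid hn h2 hβ
          unfold Ahat
          rw [if_neg (by push_neg; exact ⟨hα1, hβ1⟩),
            if_neg (by rintro ⟨hc, -⟩; exact hα2 hc), if_neg hβ2, if_neg hα2]
        rw [w1, w2, w3]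
        ring
      rw [Finset.sum_congr rfl inner, Finset.sum_add_distrib, hSA]
      congr 1
      rw [hSB, Finset.mul_sum]
      exact Finset.sum_congr rfl fun α _ => by ring
    rw [t1, t2, t3]
    ring
  have hBhat : ∑ α, Bhat n hn A B α * u α = -(B (lastI n hn) * s) - SAN := by
    rw [split3 hn h2 (fun α => Bhat n hn A B α * u α)]
    have t1 : Bhat n hn A B (firstI n hn) = 0 := by
      unfold Bhat; rw [if_pos h0]
    have t2 : Bhat n hn A B (lastI n hn) = -B (lastI n hn) := by
      unfold Bhat; rw [if_neg hN0, if_pos hN]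
    have t3 : ∑ α ∈ mid, Bhat n hn A B α * u α = -SAN := by
      rw [hSAN, ← Finset.sum_neg_distrib]
      refine Finset.sum_congr rfl fun α hα => ?_
      obtain ⟨hα1, hα2⟩ := mem_mid hn h2 hα
      unfold Bhat
      rw [if_neg hα1, if_neg hα2]
      ring
    rw [t1, t2, t3]
    ring
  -- assemble
  have expand : s * s *
      (1 / 2 * (∑ α, ∑ β, A α β * invMap n hn u α * invMap n hn u β)
        + (∑ α, B α * invMap n hn u α) + C)
      = 1 / 2 * (s * s * (∑ α, ∑ β, A α β * invMap n hn u α * invMap n hn u β))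
        + s * (s * (∑ α, B α * invMap n hn u α)) + C * (s * s) := by
    ring
  rw [expand, e2, e1, hAV, hBV, hAhat, hBhat]
  ring

end quad

end Inv10

open Inv10

/-- inversion symmetry of the Euler/charge data: quasi-homogeneity
`E(F) = (3-d)F + quadratic` with `E = Σ (1 - d/2 - μ_α) v^α ∂_α` implies
`Ê(F̂) = (3-d̂)F̂ + quadratic in v̂`, with `d̂ = 2-d` and hatted spectrum `μ̂`. -/
theorem inversion_euler_data (n : ℕ) (hn : 2 ≤ n)
    (F : (Fin n → ℝ) → ℝ) (hF : ContDiff ℝ (⊤ : ℕ∞) F)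
    (hunit : ∀ v : Fin n → ℝ, v (lastI n (by omega)) ≠ 0 → ∀ α β : Fin n,
      pd (fun x => pd (fun y => pd F β y) α x) (firstI n (by omega)) v = eta n α β)
    (d : ℝ) (μ : Fin n → ℝ)
    (hμ1 : μ (firstI n (by omega)) = -d / 2)
    (hμdual : ∀ α : Fin n, μ α + μ ⟨n - 1 - (α : ℕ), by omega⟩ = 0)
    (A : Fin n → Fin n → ℝ) (B : Fin n → ℝ) (C : ℝ)
    (hAsym : ∀ α β, A α β = A β α)
    (hA1 : ∀ α, A (firstI n (by omega)) α = 0)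
    (hB1 : B (firstI n (by omega)) = 0)
    (hquasi : ∀ v : Fin n → ℝ, v (lastI n (by omega)) ≠ 0 →
      (∑ α, (1 - d / 2 - μ α) * v α * pd F α v)
        = (3 - d) * F v + (1 / 2) * (∑ α, ∑ β, A α β * v α * v β) + (∑ α, B α * v α) + C) :
    ∃ (Ahat : Fin n → Fin n → ℝ) (Bhat : Fin n → ℝ) (Chat : ℝ),
      ∀ vh : Fin n → ℝ, vh (lastI n (by omega)) ≠ 0 →
        (∑ α, (1 - (2 - d) / 2 - muHat n (by omega) μ α) * vh α *
            pd (potHat n (by omega) F) α vh)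
          = (3 - (2 - d)) * potHat n (by omega) F vh
            + (1 / 2) * (∑ α, ∑ β, Ahat α β * vh α * vh β)
            + (∑ α, Bhat α * vh α) + Chat := by

  have hn0 : 0 < n := by omega
  refine ⟨Inv10.Ahat n A B C, Inv10.Bhat n hn0 A B,
    1 / 2 * A (lastI n hn0) (lastI n hn0), ?_⟩
  intro u hs0
  have hs : u (lastI n hn0) ≠ 0 := hs0
  have hwN : invMap n hn0 u (lastI n hn0) ≠ 0 := by
    rw [invMap_last hn0 u hn]
    exact div_ne_zero (by norm_num) hs
  have hdual' : ∀ α, μ α + μ (sg n hn0 α) = 0 := fun α => hμdual α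
  set w := invMap n hn0 u with hwdef
  set s := u (lastI n hn0) with hsdef
  set mh : Fin n → ℝ := fun γ => 1 - (2 - d) / 2 - muHat n hn0 μ γ with hmh
  have hmN : mh (lastI n hn0) = d - 1 := by
    simp only [hmh]; rw [mhat_last hn0 μ d hn hμ1]; ring
  have hm0 : mh (firstI n hn0) = 1 := by
    simp only [hmh]; rw [mhat_first hn0 μ d hn hμ1 hdual']; ring
  -- expand the partial derivatives of potHat
  have step1 : (∑ γ, mh γ * u γ * pd (potHat n hn0 F) γ u)
      = (∑ γ, ∑ β, (s * s * pd F β w) * (mh γ * u γ * Minv n hn0 u β γ))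
        + ((∑ γ, (mh γ * u γ * (F w * (s + s))) * (if γ = lastI n hn0 then 1 else 0))
        + (∑ γ, (u (firstI n hn0) * (mh γ * (u γ * u (sg n hn0 γ)))
            + (mh γ * u γ * (1 / 2 * Qf n u)) * (if γ = firstI n hn0 then 1 else 0)))) := by
    rw [← Finset.sum_add_distrib, ← Finset.sum_add_distrib]
    refine Finset.sum_congr rfl fun γ _ => ?_
    rw [pd_potHat hn0 hF hn hs γ, ← hsdef, ← hwdef]
    have e1 : mh γ * u γ * (s * s * (∑ β, Minv n hn0 u β γ * pd F β w))
        = ∑ β, (s * s * pd F β w) * (mh γ * u γ * Minv n hn0 u β γ) := by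
      rw [show mh γ * u γ * (s * s * (∑ β, Minv n hn0 u β γ * pd F β w))
          = (mh γ * u γ * (s * s)) * (∑ β, Minv n hn0 u β γ * pd F β w) from by ring,
        Finset.mul_sum]
      exact Finset.sum_congr rfl fun β _ => by ring
    have e2 : mh γ * u γ * (F w * ((s + s) * (if lastI n hn0 = γ then 1 else 0)))
        = (mh γ * u γ * (F w * (s + s))) * (if γ = lastI n hn0 then 1 else 0) := by
      rcases eq_or_ne (lastI n hn0) γ with h | h
      · rw [if_pos h, if_pos h.symm]; ring
      · rw [if_neg h, if_neg (fun hc => h hc.symm)]; ring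
    have e3 : mh γ * u γ * (1 / 2 * (u (firstI n hn0) * (2 * u (sg n hn0 γ))
          + Qf n u * (if firstI n hn0 = γ then 1 else 0)))
        = u (firstI n hn0) * (mh γ * (u γ * u (sg n hn0 γ)))
          + (mh γ * u γ * (1 / 2 * Qf n u)) * (if γ = firstI n hn0 then 1 else 0) := by
      rcases eq_or_ne (firstI n hn0) γ with h | h
      · rw [if_pos h, if_pos h.symm]; ring
      · rw [if_neg h, if_neg (fun hc => h hc.symm)]; ring
    rw [mul_add, mul_add, e1, e2, e3]
    ring
  have hS1 : (∑ γ, ∑ β, (s * s * pd F β w) * (mh γ * u γ * Minv n hn0 u β γ))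
      = s * s * ((3 - d) * F w + 1 / 2 * (∑ α, ∑ β, A α β * w α * w β)
          + (∑ α, B α * w α) + C) := by
    rw [Finset.sum_comm]
    have e : ∀ β : Fin n, (∑ γ, (s * s * pd F β w) * (mh γ * u γ * Minv n hn0 u β γ))
        = (s * s) * ((1 - d / 2 - μ β) * w β * pd F β w) := by
      intro β
      rw [← Finset.mul_sum, key_coeff hn0 hn hs μ d hμ1 hdual' β, ← hwdef]
      ring
    rw [Finset.sum_congr rfl (fun β _ => e β), ← Finset.mul_sum,
      hquasi w hwN]
  have hS2 : (∑ γ, (mh γ * u γ * (F w * (s + s))) * (if γ = lastI n hn0 then 1 else 0))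
      = (d - 1) * s * (F w * (s + s)) := by
    rw [sum_if_collapse hn0, hmN, ← hsdef]
    ring
  have hS3 : (∑ γ, (u (firstI n hn0) * (mh γ * (u γ * u (sg n hn0 γ)))
        + (mh γ * u γ * (1 / 2 * Qf n u)) * (if γ = firstI n hn0 then 1 else 0)))
      = u (firstI n hn0) * (d / 2 * Qf n u)
        + u (firstI n hn0) * (1 / 2 * Qf n u) := by
    rw [Finset.sum_add_distrib, ← Finset.mul_sum,
      pair_sum hn0 d mh u (mhat_pair hn0 μ d hn hμ1 hdual'),
      sum_if_collapse hn0, hm0, ← Qf_eq hn0]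
    ring
  calc (∑ γ, mh γ * u γ * pd (potHat n hn0 F) γ u)
      = s * s * ((3 - d) * F w + 1 / 2 * (∑ α, ∑ β, A α β * w α * w β)
          + (∑ α, B α * w α) + C)
        + ((d - 1) * s * (F w * (s + s))
        + (u (firstI n hn0) * (d / 2 * Qf n u)
          + u (firstI n hn0) * (1 / 2 * Qf n u))) := by
        rw [step1, hS1, hS2, hS3]
    _ = (3 - (2 - d)) * potHat n hn0 F u
        + (1 / 2) * (∑ α, ∑ β, Inv10.Ahat n A B C α β * u α * u β)
        + (∑ α, Inv10.Bhat n hn0 A B α * u α)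
        + 1 / 2 * A (lastI n hn0) (lastI n hn0) := by
        rw [potHat_eq hn0 hn hs]
        have hq := quad_transform hn0 hn hs A B C hAsym hA1 hB1
        rw [← hsdef, ← hwdef] at hq
        linear_combination hq
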